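/- arXiv:1402.4984 — 6 statements merged into one kernel-verified Lean document; each statement's English description precedes it below -/
import Mathlib

section
/- There exists an m×m real orthogonal matrix B (independent of A and K) such that for all n×n real matrices A and K, the restricted quasi-Kronecker matrix rQK(A,K) satisfies rQK(A,K) = (B ⊗ I_n)ᵗ · bdiag(A + m·K, A, A, …, A) · (B ⊗ I_n), where bdiag(A + m·K, A, …, A) denotes the mn×mn block-diagonal matrix whose first n×n diagonal block is A + m·K and whose remaining m−1 diagonal blocks all equal A. -/
/-! Pick an orthogonal `B` whose first row is the unit vector `e / √m`. Conjugating by `B ⊗ I_n`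
acts on the first Kronecker factor only, so it fixes `I_m ⊗ A` and sends `E₀₀ ⊗ (m • K)` to
`(Bᵀ E₀₀ B) ⊗ (m • K) = (e eᵗ / m) ⊗ (m • K) = (e eᵗ) ⊗ K`. -/

open Matrix Kronecker

/-- The restricted quasi-Kronecker matrix `rQK(A, K) = I_m ⊗ A + (e eᵗ) ⊗ K`. -/
noncomputable def rQK {n : ℕ} (m : ℕ) (A K : Matrix (Fin n) (Fin n) ℝ) :
    Matrix (Fin m × Fin n) (Fin m × Fin n) ℝ :=
  (1 : Matrix (Fin m) (Fin m) ℝ) ⊗ₖ A + (Matrix.of fun _ _ => (1 : ℝ)) ⊗ₖ K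

/-- Block-diagonal matrix with `n × n` diagonal blocks `D 0, …, D (m-1)`. -/
noncomputable def bdiag {n m : ℕ} (D : Fin m → Matrix (Fin n) (Fin n) ℝ) :
    Matrix (Fin m × Fin n) (Fin m × Fin n) ℝ :=
  Matrix.of fun p q => if p.1 = q.1 then D p.1 p.2 q.2 else 0

theorem Matrix.exists_orthogonal_row_eq {ι : Type*} [Fintype ι] [DecidableEq ι] (i₀ : ι)
    (u : EuclideanSpace ℝ ι) (hu : ‖u‖ = 1) :
    ∃ B : Matrix ι ι ℝ, Bᵀ * B = 1 ∧ ∀ j, B i₀ j = u j := by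
  have horth : Orthonormal ℝ (({i₀} : Set ι).domRestrict fun _ => u) :=
    ⟨fun _ => hu, fun i j hij => absurd (Subtype.ext (i.2.trans j.2.symm)) hij⟩
  obtain ⟨b, hb⟩ := horth.exists_orthonormalBasis_extension_of_card_eq (by simp)
  set M := (EuclideanSpace.basisFun ι ℝ).toBasis.toMatrix b
  refine ⟨Mᵀ, ?_, fun j => ?_⟩
  · rw [transpose_transpose, ← mem_orthogonalGroup_iff]
    exact (EuclideanSpace.basisFun ι ℝ).toMatrix_orthonormalBasis_mem_orthogonal b
  · simp [M, Module.Basis.toMatrix_apply, hb i₀ rfl]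

theorem Matrix.transpose_kronecker_one_mul_kronecker_mul {R m n p : Type*} [CommSemiring R]
    [Fintype m] [Fintype n] [DecidableEq p] [Fintype p]
    (B : Matrix m n R) (X : Matrix m m R) (Y : Matrix p p R) :
    (B ⊗ₖ (1 : Matrix p p R))ᵀ * (X ⊗ₖ Y) * (B ⊗ₖ (1 : Matrix p p R)) = (Bᵀ * X * B) ⊗ₖ Y := by
  rw [← kroneckerMap_transpose, transpose_one, ← mul_kronecker_mul, ← mul_kronecker_mul,
    one_mul, mul_one]

theorem bdiag_ite_eq_kronecker {n m : ℕ} (i₀ : Fin m) (A C : Matrix (Fin n) (Fin n) ℝ) :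
    bdiag (fun i => if i = i₀ then C else A) = 1 ⊗ₖ A + single i₀ i₀ 1 ⊗ₖ (C - A) := by
  ext ⟨i, a⟩ ⟨j, c⟩
  simp only [bdiag, of_apply, Matrix.add_apply, Matrix.sub_apply, kroneckerMap_apply, one_apply,
    single_apply]
  split_ifs <;> grind

theorem Matrix.transpose_mul_single_mul {R ι : Type*} [CommSemiring R] [Fintype ι] [DecidableEq ι]
    (B : Matrix ι ι R) (i j : ι) : Bᵀ * single i j 1 * B = vecMulVec (B i) (B j) := by
  rw [single_eq_single_vecMulVec_single, mul_vecMulVec, vecMulVec_mul]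
  congr 1
  · ext k; simp [mulVec_single]
  · ext k; simp [single_vecMul]

/-- There is an `m × m` orthogonal matrix `B`, independent of `A` and `K`, that
block-rotates `rQK(A, K)` into `bdiag(A + m·K, A, …, A)`. -/
theorem rQK_block_rotated (n m : ℕ) (hm : 0 < m) :
    ∃ B : Matrix (Fin m) (Fin m) ℝ, Bᵀ * B = 1 ∧
      ∀ A K : Matrix (Fin n) (Fin n) ℝ,
        rQK m A K =
          (B ⊗ₖ (1 : Matrix (Fin n) (Fin n) ℝ))ᵀ *
            bdiag (fun i => if (i : ℕ) = 0 then A + (m : ℝ) • K else A) *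
            (B ⊗ₖ (1 : Matrix (Fin n) (Fin n) ℝ)) := by
  have hm' : (0 : ℝ) < m := by exact_mod_cast hm
  set c := (√(m : ℝ))⁻¹
  have hc : c * c * m = 1 := by
    rw [← mul_inv, Real.mul_self_sqrt hm'.le, inv_mul_cancel₀ hm'.ne']
  have hu : ‖WithLp.toLp 2 (fun _ : Fin m => c)‖ = 1 := by
    rw [EuclideanSpace.norm_eq]
    simp [c, Real.sq_sqrt hm'.le, hm'.ne']
  obtain ⟨B, hB, hrow⟩ := exists_orthogonal_row_eq ⟨0, hm⟩ _ hu
  refine ⟨B, hB, fun A K => ?_⟩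
  have hfirst : (fun i : Fin m => if (i : ℕ) = 0 then A + (m : ℝ) • K else A) =
      fun i => if i = ⟨0, hm⟩ then A + (m : ℝ) • K else A := by
    simp only [Fin.ext_iff]
  rw [hfirst, bdiag_ite_eq_kronecker, add_sub_cancel_left, Matrix.mul_add, Matrix.add_mul,
    transpose_kronecker_one_mul_kronecker_mul, transpose_kronecker_one_mul_kronecker_mul,
    mul_one, hB, transpose_mul_single_mul, rQK]
  congr 1
  ext ⟨i, a⟩ ⟨j, b⟩
  simp [vecMulVec_apply, hrow, ← mul_assoc, hc]
end

section
/- Let A and K be n×n real matrices and m a positive integer. Then the characteristic polynomial of the mn×mn matrix rQK(A,K) equals the product of the characteristic polynomial of A + m·K with the (m−1)-st power of the characteristic polynomial of A. Consequently the eigenvalues of rQK(A,K), counted with multiplicity, are the eigenvalues of A + m·K together with m−1 copies of the eigenvalues of A. -/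
/-!
Conjugating by `P ⊗ 1` turns `1 ⊗ A + J ⊗ K` into `1 ⊗ A + (P⁻¹ J P) ⊗ K`, where `J = e eᵗ`.
For the shear `P = 1 + (e - δ₀) δ₀ᵗ` (with inverse `1 - (e - δ₀) δ₀ᵗ`) we have `P⁻¹ e = δ₀`, so
`P⁻¹ J P = δ₀ (eᵗ P)` is supported on the first row and has diagonal `(m, 0, …, 0)`.
The conjugate is then block upper triangular with diagonal blocks `A + m K` and `m - 1` copies
of `A`, and its characteristic polynomial is the product of theirs.
-/

open Matrix Kronecker Polynomial

namespace Matrix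

variable {R ι κ : Type*} [CommRing R] [Fintype κ] [DecidableEq κ]

theorem charpoly_mul_mul_of_mul_eq_one {P Q : Matrix κ κ R} (h : P * Q = 1) (M : Matrix κ κ R) :
    (P * M * Q).charpoly = M.charpoly := by
  rw [charpoly_mul_comm, ← mul_assoc, mul_eq_one_comm.mp h, one_mul]

theorem charpoly_toSquareBlock_fst_one_kronecker_add_kronecker [Fintype ι] [DecidableEq ι]
    (A K : Matrix κ κ R) (T : Matrix ι ι R) (i : ι) :
    ((1 ⊗ₖ A + T ⊗ₖ K).toSquareBlock Prod.fst i).charpoly = (A + T i i • K).charpoly := by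
  let e : κ ≃ {p : ι × κ // p.1 = i} :=
    { toFun k := ⟨(i, k), rfl⟩
      invFun p := p.1.2
      left_inv _ := rfl
      right_inv := by rintro ⟨⟨_, _⟩, rfl⟩; rfl }
  have : (1 ⊗ₖ A + T ⊗ₖ K).toSquareBlock Prod.fst i = reindex e e (A + T i i • K) := by
    ext ⟨⟨_, k⟩, hk⟩ ⟨⟨_, l⟩, hl⟩
    simp only at hk hl
    subst hk hl
    simp [toSquareBlock_def, e, mul_comm]
  rw [this, charpoly_reindex]

section LinearOrder

variable [LinearOrder ι]

omit [Fintype κ] [DecidableEq κ] in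
theorem IsUpperTriangular.blockTriangular_kronecker {T : Matrix ι ι R}
    (hT : T.IsUpperTriangular) (K : Matrix κ κ R) : (T ⊗ₖ K).BlockTriangular Prod.fst :=
  fun _ _ h => by simp [hT h]

theorem IsUpperTriangular.charpoly_one_kronecker_add_kronecker [Fintype ι] {T : Matrix ι ι R}
    (hT : T.IsUpperTriangular) (A K : Matrix κ κ R) :
    (1 ⊗ₖ A + T ⊗ₖ K).charpoly = ∏ i, (A + T i i • K).charpoly := by
  rw [charpoly, ((IsUpperTriangular.blockTriangular_kronecker blockTriangular_one A).add
    (hT.blockTriangular_kronecker K)).charmatrix.det_fintype]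
  simp_rw [← charmatrix_toSquareBlock]
  exact Finset.prod_congr rfl fun i _ =>
    charpoly_toSquareBlock_fst_one_kronecker_add_kronecker A K T i

theorem isUpperTriangular_vecMulVec_single {i₀ : ι} (h₀ : IsBot i₀) (a : R) (y : ι → R) :
    (vecMulVec (Pi.single i₀ a) y).IsUpperTriangular := fun i j hji => by
  have : i ≠ i₀ := fun h => (h ▸ hji).not_ge (h₀ j)
  simp [vecMulVec_apply, this]

end LinearOrder

section Shear

variable [Fintype ι] [DecidableEq ι] (i₀ : ι)

noncomputable def shearToSingle : Matrix ι ι R :=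
  vecMulVec (1 - Pi.single i₀ 1) (Pi.single i₀ 1)

theorem shearToSingle_mul_self : shearToSingle (R := R) i₀ * shearToSingle i₀ = 0 := by
  simp [shearToSingle, vecMulVec_mul_vecMulVec]

theorem one_sub_shearToSingle_mul_one_add :
    (1 - shearToSingle (R := R) i₀) * (1 + shearToSingle i₀) = 1 := by
  rw [sub_mul, one_mul, mul_add, mul_one, shearToSingle_mul_self]
  abel

theorem one_sub_shearToSingle_mulVec_one :
    (1 - shearToSingle (R := R) i₀) *ᵥ 1 = Pi.single i₀ 1 := by
  simp [sub_mulVec, shearToSingle, vecMulVec_mulVec]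

theorem one_vecMul_one_add_shearToSingle :
    (1 : ι → R) ᵥ* (1 + shearToSingle i₀) =
      1 + ((Fintype.card ι : R) - 1) • Pi.single i₀ 1 := by
  simp [vecMul_add, shearToSingle, vecMul_vecMulVec, dotProduct_sub]

theorem one_sub_shearToSingle_mul_of_one_mul_one_add :
    (1 - shearToSingle i₀) * (of fun _ _ => 1 : Matrix ι ι R) * (1 + shearToSingle i₀) =
      vecMulVec (Pi.single i₀ 1) (1 + ((Fintype.card ι : R) - 1) • Pi.single i₀ 1) := by
  have : (of fun _ _ => 1 : Matrix ι ι R) = vecMulVec 1 1 := by ext; simp [vecMulVec_apply]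
  rw [this, mul_vecMulVec, vecMulVec_mul, one_sub_shearToSingle_mulVec_one,
    one_vecMul_one_add_shearToSingle]

end Shear

theorem charpoly_one_kronecker_add_of_one_kronecker [Fintype ι] [LinearOrder ι] {i₀ : ι}
    (h₀ : IsBot i₀) (A K : Matrix κ κ R) :
    ((1 : Matrix ι ι R) ⊗ₖ A + (of fun _ _ => 1 : Matrix ι ι R) ⊗ₖ K).charpoly =
      (A + (Fintype.card ι : R) • K).charpoly * A.charpoly ^ (Fintype.card ι - 1) := by
  set N : Matrix ι ι R := shearToSingle i₀
  set T := (1 - N) * (of fun _ _ => 1 : Matrix ι ι R) * (1 + N)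
  have hinv : ((1 - N) ⊗ₖ (1 : Matrix κ κ R)) * ((1 + N) ⊗ₖ 1) = 1 := by
    rw [← mul_kronecker_mul, one_sub_shearToSingle_mul_one_add, one_mul, one_kronecker_one]
  have hconj : ((1 - N) ⊗ₖ (1 : Matrix κ κ R)) *
      ((1 : Matrix ι ι R) ⊗ₖ A + (of fun _ _ => 1 : Matrix ι ι R) ⊗ₖ K) * ((1 + N) ⊗ₖ 1) =
        1 ⊗ₖ A + T ⊗ₖ K := by
    rw [Matrix.mul_add, Matrix.add_mul, ← mul_kronecker_mul, ← mul_kronecker_mul,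
      ← mul_kronecker_mul, ← mul_kronecker_mul, Matrix.mul_one, Matrix.one_mul, Matrix.mul_one,
      Matrix.mul_one, Matrix.one_mul, one_sub_shearToSingle_mul_one_add]
  have hT : T = vecMulVec (Pi.single i₀ 1) (1 + ((Fintype.card ι : R) - 1) • Pi.single i₀ 1) :=
    one_sub_shearToSingle_mul_of_one_mul_one_add i₀
  have hT₀ : T i₀ i₀ = Fintype.card ι := by simp [hT, vecMulVec_apply]
  have hblock : ∀ i ∈ ({i₀}ᶜ : Finset ι), (A + T i i • K).charpoly = A.charpoly := fun i hi => by
    have hne : i ≠ i₀ := by simpa using hi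
    simp [hT, vecMulVec_apply, hne]
  have hTri : T.IsUpperTriangular := hT ▸ isUpperTriangular_vecMulVec_single h₀ _ _
  rw [← charpoly_mul_mul_of_mul_eq_one hinv, hconj, hTri.charpoly_one_kronecker_add_kronecker,
    Fintype.prod_eq_mul_prod_compl i₀, hT₀, Finset.prod_congr rfl hblock, Finset.prod_const,
    Finset.card_compl, Finset.card_singleton]

end Matrix

/-- The characteristic polynomial of `rQK(A, K)` is the characteristic polynomial of
`A + m·K` times the `(m−1)`-st power of the characteristic polynomial of `A`;
consequently its eigenvalues (roots of the characteristic polynomial, with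
multiplicity) are those of `A + m·K` together with `m − 1` copies of those of `A`. -/
theorem rQK_charpoly (n m : ℕ) (hm : 0 < m) (A K : Matrix (Fin n) (Fin n) ℝ) :
    (rQK m A K).charpoly = (A + (m : ℝ) • K).charpoly * A.charpoly ^ (m - 1) ∧
      (rQK m A K).charpoly.roots =
        (A + (m : ℝ) • K).charpoly.roots + (m - 1) • A.charpoly.roots := by
  have hcharpoly : (rQK m A K).charpoly = (A + (m : ℝ) • K).charpoly * A.charpoly ^ (m - 1) := by
    have h := charpoly_one_kronecker_add_of_one_kronecker (i₀ := (⟨0, hm⟩ : Fin m))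
      (fun _ => Nat.zero_le _) A K
    rwa [Fintype.card_fin] at h
  refine ⟨hcharpoly, ?_⟩
  rw [hcharpoly, roots_mul ((charpoly_monic _).mul ((charpoly_monic _).pow _)).ne_zero, roots_pow]
end

section
/- For any n×n real matrices A and K and any positive integer m, the determinant of the mn×mn matrix rQK(A,K) equals det(A + m·K) · det(A)^{m−1}. Consequently, when A and A + m·K have positive determinant, log det rQK(A,K) = log det(A + m·K) + (m−1)·log det(A). -/
open Matrix Kronecker

section KroneckerDet

variable {R : Type*} [CommRing R] {m n : Type*} [Fintype m] [DecidableEq m] [Fintype n]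
  [DecidableEq n]

theorem det_one_kronecker_add_diagonal_kronecker (A K : Matrix n n R) (d : m → R) :
    det (1 ⊗ₖ A + diagonal d ⊗ₖ K) = ∏ i, det (A + d i • K) := by
  have hblock : 1 ⊗ₖ A + diagonal d ⊗ₖ K =
      reindex (Equiv.prodComm n m) (Equiv.prodComm n m) (blockDiagonal fun i => A + d i • K) := by
    rw [← diagonal_one, diagonal_kronecker, diagonal_kronecker]
    simp only [one_smul]
    exact (congrArg (reindex (Equiv.prodComm n m) (Equiv.prodComm n m))
      (blockDiagonal_add (fun _ => A) fun i => d i • K)).symm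
  rw [hblock, det_reindex_self, det_blockDiagonal]

theorem det_one_kronecker_add_kronecker_of_mul_eq_diagonal (A K : Matrix n n R)
    {P Q B : Matrix m m R} {d : m → R} (hPQ : P * Q = 1) (hB : P * B * Q = diagonal d) :
    det (1 ⊗ₖ A + B ⊗ₖ K) = ∏ i, det (A + d i • K) := by
  have hQP : Q * P = 1 := mul_eq_one_comm.mp hPQ
  rw [← det_one_kronecker_add_diagonal_kronecker, ← hB,
    ← det_conj_of_mul_eq_one (M := P ⊗ₖ (1 : Matrix n n R)) (M' := Q ⊗ₖ 1)]
  · simp [mul_add, add_mul, ← mul_kronecker_mul, hPQ]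
  · rw [← mul_kronecker_mul, hPQ, one_mul, one_kronecker_one]
  · rw [← mul_kronecker_mul, hQP, one_mul, one_kronecker_one]

end KroneckerDet

theorem exists_mul_eq_one_and_mul_allOnes_mul_eq_diagonal {𝕜 : Type*} [Field 𝕜] {m : ℕ}
    [NeZero m] (hm : (m : 𝕜) ≠ 0) :
    ∃ P Q : Matrix (Fin m) (Fin m) 𝕜,
      P * Q = 1 ∧ P * of (fun _ _ => 1) * Q = diagonal (Pi.single 0 (m : 𝕜)) := by
  -- the rows of `P` are the left eigenvectors `eᵗ` and `e_iᵗ - e_0ᵗ` (`i ≠ 0`) of `e eᵗ`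
  let P : Matrix (Fin m) (Fin m) 𝕜 :=
    of fun i j => if i = 0 then 1 else (if i = j then 1 else 0) - (if j = 0 then 1 else 0)
  let Q : Matrix (Fin m) (Fin m) 𝕜 :=
    of fun i j => if j = 0 then (m : 𝕜)⁻¹ else (if i = j then 1 else 0) - (m : 𝕜)⁻¹
  refine ⟨P, Q, ?_, ?_⟩ <;> ext i j <;> by_cases hi : i = 0 <;> by_cases hj : j = 0 <;>
    simp [mul_apply, one_apply, diagonal_apply, P, Q, hi, hj, eq_comm (a := (0 : Fin m)), hm,
      sub_mul, mul_sub, Finset.sum_sub_distrib]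

theorem det_rQK {n m : ℕ} [NeZero m] (A K : Matrix (Fin n) (Fin n) ℝ) :
    (rQK m A K).det = (A + (m : ℝ) • K).det * A.det ^ (m - 1) := by
  obtain ⟨P, Q, hPQ, hPJQ⟩ :=
    exists_mul_eq_one_and_mul_allOnes_mul_eq_diagonal (𝕜 := ℝ) (m := m) (NeZero.ne _)
  rw [rQK, det_one_kronecker_add_kronecker_of_mul_eq_diagonal A K hPQ hPJQ,
    Fintype.prod_eq_mul_prod_compl 0, Pi.single_eq_same]
  congr 1
  rw [Finset.prod_eq_pow_card fun i hi => by
      rw [Pi.single_eq_of_ne (by simpa using hi), zero_smul, add_zero],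
    Finset.card_compl, Finset.card_singleton, Fintype.card_fin]

/-- `det rQK(A,K) = det(A + m·K) · det(A)^{m−1}`; consequently, when both determinants
are positive, `log det rQK(A,K) = log det(A + m·K) + (m−1)·log det A`. -/
theorem rQK_det (n m : ℕ) (hm : 0 < m) (A K : Matrix (Fin n) (Fin n) ℝ) :
    (rQK m A K).det = (A + (m : ℝ) • K).det * A.det ^ (m - 1) ∧
      (0 < (A + (m : ℝ) • K).det → 0 < A.det →
        Real.log (rQK m A K).det =
          Real.log (A + (m : ℝ) • K).det + ((m : ℝ) - 1) * Real.log A.det) := by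
  have : NeZero m := ⟨hm.ne'⟩
  refine ⟨det_rQK A K, fun hAK hA => ?_⟩
  rw [det_rQK, Real.log_mul hAK.ne' (pow_pos hA _).ne', Real.log_pow, Nat.cast_sub hm,
    Nat.cast_one]
end

section
/- Let A₁, …, A_m be invertible n×n real matrices, u, v ∈ ℝ^m, and let K = L Lᵗ for an n×n real matrix L. Set P = I_n + (v ⊗ L)ᵗ · bdiag(A₁⁻¹, …, A_m⁻¹) · (u ⊗ L), where bdiag(A₁⁻¹, …, A_m⁻¹) is the block-diagonal matrix with blocks Aᵢ⁻¹. If P is invertible, then the quasi-Kronecker matrix bdiag(A₁, …, A_m) + (u vᵗ) ⊗ K is invertible with inverse bdiag(Aᵢ⁻¹) − bdiag(Aᵢ⁻¹)·(u ⊗ L)·P⁻¹·(v ⊗ L)ᵗ·bdiag(Aᵢ⁻¹). -/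
open Matrix Kronecker

theorem bdiag_mul_bdiag {n m : ℕ} (A B : Fin m → Matrix (Fin n) (Fin n) ℝ) :
    bdiag A * bdiag B = bdiag (fun i => A i * B i) := by
  ext p q
  simp only [bdiag, mul_apply, of_apply, Fintype.sum_prod_type]
  rcases eq_or_ne p.1 q.1 with h | h
  · simp [h, Finset.sum_ite_eq', Matrix.mul_apply]
  · simp only [h, if_false]
    apply Finset.sum_eq_zero
    intro i _
    apply Finset.sum_eq_zero
    intro j _
    rcases eq_or_ne p.1 i with hi | hi
    · simp [← hi, h]
    · simp [hi]

theorem bdiag_one {n m : ℕ} : bdiag (fun _ : Fin m => (1 : Matrix (Fin n) (Fin n) ℝ)) = 1 := by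
  ext p q
  rcases eq_or_ne p q with h | h
  · simp [bdiag, h, Matrix.one_apply]
  · simp only [bdiag, of_apply, Matrix.one_apply, h, if_false]
    rcases eq_or_ne p.1 q.1 with h1 | h1
    · have h2 : p.2 ≠ q.2 := fun h2 => h (Prod.ext h1 h2)
      simp [h1, Matrix.one_apply, h2]
    · simp [h1]

/-- Heersink–Furrer inverse of a quasi-Kronecker matrix: if each `Aᵢ` is invertible,
`K = L Lᵀ`, and `P = I + (v ⊗ L)ᵗ · bdiag(Aᵢ⁻¹) · (u ⊗ L)` is invertible, then
`bdiag(A₁,…,A_m) + (u vᵗ) ⊗ K` is invertible with inverse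
`bdiag(Aᵢ⁻¹) − bdiag(Aᵢ⁻¹)(u ⊗ L) P⁻¹ (v ⊗ L)ᵗ bdiag(Aᵢ⁻¹)`. -/
theorem QK_inverse (n m : ℕ) (A : Fin m → Matrix (Fin n) (Fin n) ℝ)
    (hA : ∀ i, IsUnit (A i).det)
    (u v : Fin m → ℝ) (L K : Matrix (Fin n) (Fin n) ℝ) (hK : K = L * Lᵀ)
    (P : Matrix (Unit × Fin n) (Unit × Fin n) ℝ)
    (hP : P = 1 + ((Matrix.replicateCol Unit v) ⊗ₖ L)ᵀ * bdiag (fun i => (A i)⁻¹) *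
      ((Matrix.replicateCol Unit u) ⊗ₖ L))
    (hPunit : IsUnit P.det) :
    IsUnit (bdiag A + (Matrix.vecMulVec u v) ⊗ₖ K).det ∧
      (bdiag A + (Matrix.vecMulVec u v) ⊗ₖ K)⁻¹ =
        bdiag (fun i => (A i)⁻¹) -
          bdiag (fun i => (A i)⁻¹) * ((Matrix.replicateCol Unit u) ⊗ₖ L) * P⁻¹ *
            ((Matrix.replicateCol Unit v) ⊗ₖ L)ᵀ * bdiag (fun i => (A i)⁻¹) := by
  set D := bdiag A
  set Di := bdiag (fun i => (A i)⁻¹)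
  set U := (Matrix.replicateCol Unit u) ⊗ₖ L
  set V := (Matrix.replicateCol Unit v) ⊗ₖ L
  have hDDi : D * Di = 1 := by
    rw [bdiag_mul_bdiag, ← bdiag_one]
    exact congrArg bdiag (funext fun i => Matrix.mul_nonsing_inv _ (hA i))
  have hUV : (Matrix.vecMulVec u v) ⊗ₖ K = U * Vᵀ := by
    have hVt : Vᵀ = (Matrix.replicateCol Unit v)ᵀ ⊗ₖ Lᵀ := (Matrix.kroneckerMap_transpose _ _ _).symm
    rw [hVt, Matrix.transpose_replicateCol]
    simp only [U, ← Matrix.mul_kronecker_mul, hK, Matrix.vecMulVec_eq Unit]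
  have hVDU : Vᵀ * Di * U = P - 1 := by rw [hP]; simp
  have hPP : P * P⁻¹ = 1 := Matrix.mul_nonsing_inv _ hPunit
  have hUVDU : U * Vᵀ * Di * U = U * (P - 1) := by
    rw [Matrix.mul_assoc U Vᵀ Di, Matrix.mul_assoc U (Vᵀ * Di) U, hVDU]
  have hU1 : U * (P - 1) * P⁻¹ = U - U * P⁻¹ := by
    rw [Matrix.mul_assoc, Matrix.sub_mul, hPP, Matrix.one_mul, Matrix.mul_sub, Matrix.mul_one]
  have key : (D + (Matrix.vecMulVec u v) ⊗ₖ K) *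
      (Di - Di * U * P⁻¹ * Vᵀ * Di) = 1 := by
    rw [hUV, Matrix.add_mul, Matrix.mul_sub, Matrix.mul_sub]
    simp only [← Matrix.mul_assoc]
    rw [hDDi, Matrix.one_mul, hUVDU, hU1, Matrix.sub_mul, Matrix.sub_mul]
    abel
  exact ⟨Matrix.isUnit_det_of_right_inverse key, Matrix.inv_eq_right_inv key⟩
end

section
/- Let A, K, A′, K′ be n×n real matrices and m a positive integer, with A and A + m·K invertible. Then the trace of rQK(A,K)⁻¹ · rQK(A′,K′) equals tr( (A + m·K)⁻¹ · (A′ + m·K′) ) + (m−1)·tr( A⁻¹ · A′ ). -/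
/-!
Products and traces of matrices `1 ⊗ X + J ⊗ Y` (with `J = e eᵗ`, so `J² = m J` and
`tr J = tr 1 = m`) only depend on the two blocks `X` and `X + m Y`: on `e ⊗ ℝⁿ` such a matrix
acts as `X + m Y`, and on `e^⊥ ⊗ ℝⁿ` as `X`. Hence `rQK(A,K)⁻¹ = rQK(A⁻¹, C)` with
`A⁻¹ + m C = (A + m K)⁻¹`, and the trace splits into one copy of the first block and `m - 1`
copies of the second.
-/

open Matrix Kronecker

theorem Matrix.of_const_one_mul_self {ι α : Type*} [Fintype ι] [NonAssocSemiring α] :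
    (of fun _ _ => (1 : α) : Matrix ι ι α) * of (fun _ _ => 1) =
      (Fintype.card ι : α) • of fun _ _ => 1 := by
  ext i j
  simp [mul_apply]

theorem Matrix.trace_of_const_one {ι α : Type*} [Fintype ι] [AddCommMonoidWithOne α] :
    (of fun _ _ => (1 : α) : Matrix ι ι α).trace = Fintype.card ι := by
  simp [trace]

theorem add_smul_mul_add_smul {R α : Type*} [CommSemiring R] [Semiring α] [Algebra R α]
    (c : R) (a b a' b' : α) :
    (a + c • b) * (a' + c • b') = a * a' + c • (a * b' + b * a' + c • (b * b')) := by
  simp only [add_mul, mul_add, smul_mul_assoc, mul_smul_comm, smul_add, smul_smul]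
  abel

theorem Matrix.inv_add_smul_eq {ι R : Type*} [Fintype ι] [DecidableEq ι] [CommRing R] (c : R)
    {A K : Matrix ι ι R} (hA : IsUnit A.det) (hAK : IsUnit (A + c • K).det) :
    (A + c • K)⁻¹ = A⁻¹ - c • ((A + c • K)⁻¹ * K * A⁻¹) := by
  have h := inv_sub_inv (A := A + c • K) (B := A)
    (by simp only [isUnit_iff_isUnit_det, hA, hAK])
  rw [sub_add_cancel_left, mul_neg, neg_mul, Matrix.mul_smul, Matrix.smul_mul] at h
  rw [sub_eq_add_neg, ← h, add_sub_cancel]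

section rQK

variable {n : ℕ} (m : ℕ)

theorem rQK_mul (A K A' K' : Matrix (Fin n) (Fin n) ℝ) :
    rQK m A K * rQK m A' K' = rQK m (A * A') (A * K' + K * A' + (m : ℝ) • (K * K')) := by
  simp only [rQK, add_mul, mul_add, ← mul_kronecker_mul, one_mul, mul_one,
    of_const_one_mul_self, Fintype.card_fin, smul_kronecker, kronecker_smul, kronecker_add]
  abel

theorem rQK_one_zero : rQK m (1 : Matrix (Fin n) (Fin n) ℝ) 0 = 1 := by
  simp [rQK]

theorem trace_rQK (A K : Matrix (Fin n) (Fin n) ℝ) :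
    (rQK m A K).trace = (A + (m : ℝ) • K).trace + ((m : ℝ) - 1) * A.trace := by
  simp only [rQK, trace_add, trace_kronecker, trace_one, trace_of_const_one, trace_smul,
    smul_eq_mul, Fintype.card_fin]
  ring

variable {m}

theorem rQK_inv {A K : Matrix (Fin n) (Fin n) ℝ}
    (hA : IsUnit A.det) (hAK : IsUnit (A + (m : ℝ) • K).det) :
    (rQK m A K)⁻¹ = rQK m A⁻¹ (-((A + (m : ℝ) • K)⁻¹ * K * A⁻¹)) := by
  refine inv_eq_right_inv ?_
  have hcross : A * -((A + (m : ℝ) • K)⁻¹ * K * A⁻¹) + K * A⁻¹ +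
      (m : ℝ) • (K * -((A + (m : ℝ) • K)⁻¹ * K * A⁻¹)) = 0 := by
    calc _ = K * A⁻¹ - (A + (m : ℝ) • K) * (A + (m : ℝ) • K)⁻¹ * K * A⁻¹ := by
          simp only [add_mul, Matrix.smul_mul, mul_neg, smul_neg, Matrix.mul_assoc]
          abel
      _ = 0 := by rw [mul_nonsing_inv _ hAK, Matrix.one_mul, sub_self]
  rw [rQK_mul, mul_nonsing_inv _ hA, hcross, rQK_one_zero]

end rQK

theorem rQK_inv_mul_trace_general (n m : ℕ)
    (A K A' K' : Matrix (Fin n) (Fin n) ℝ)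
    (hA : IsUnit A.det) (hAK : IsUnit (A + (m : ℝ) • K).det) :
    ((rQK m A K)⁻¹ * rQK m A' K').trace =
      ((A + (m : ℝ) • K)⁻¹ * (A' + (m : ℝ) • K')).trace +
        ((m : ℝ) - 1) * (A⁻¹ * A').trace := by
  rw [rQK_inv hA hAK, rQK_mul, trace_rQK, ← add_smul_mul_add_smul, smul_neg, ← sub_eq_add_neg,
    ← inv_add_smul_eq _ hA hAK]

/-- Trace identity: `tr(rQK(A,K)⁻¹ · rQK(A′,K′)) = tr((A + m·K)⁻¹(A′ + m·K′))
+ (m−1)·tr(A⁻¹A′)`, for `A` and `A + m·K` invertible. -/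
theorem rQK_inv_mul_trace (n m : ℕ) (hm : 0 < m)
    (A K A' K' : Matrix (Fin n) (Fin n) ℝ)
    (hA : IsUnit A.det) (hAK : IsUnit (A + (m : ℝ) • K).det) :
    ((rQK m A K)⁻¹ * rQK m A' K').trace =
      ((A + (m : ℝ) • K)⁻¹ * (A' + (m : ℝ) • K')).trace +
        ((m : ℝ) - 1) * (A⁻¹ * A').trace :=
  rQK_inv_mul_trace_general n m A K A' K' hA hAK
end

section
/- Let A and K be n×n real matrices and m a positive integer. (i) If v ∈ ℝ^n is an eigenvector of A + m·K with eigenvalue λ, then (e/√m) ⊗ v is an eigenvector of rQK(A,K) with eigenvalue λ, where e is the all-ones vector of length m. (ii) If w ∈ ℝ^m satisfies Σᵢ wᵢ = 0 and v ∈ ℝ^n is an eigenvector of A with eigenvalue μ, then w ⊗ v is an eigenvector of rQK(A,K) with eigenvalue μ (provided w ⊗ v ≠ 0). -/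
open Matrix Kronecker

theorem Matrix.kronecker_mulVec_tmul {R k l m n : Type*} [CommSemiring R] [Fintype m]
    [Fintype n] (A : Matrix k m R) (B : Matrix l n R) (w : m → R) (v : n → R) :
    (A ⊗ₖ B) *ᵥ (fun p : m × n => w p.1 * v p.2) =
      fun p => (A *ᵥ w) p.1 * (B *ᵥ v) p.2 := by
  funext p
  simp only [mulVec, dotProduct, kroneckerMap_apply, Fintype.sum_prod_type, Finset.sum_mul_sum]
  exact Finset.sum_congr rfl fun i _ => Finset.sum_congr rfl fun j _ => by ring

theorem Matrix.of_const_one_mulVec {R m : Type*} [NonAssocSemiring R] [Fintype m] (w : m → R) :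
    (Matrix.of fun _ _ => (1 : R) : Matrix m m R) *ᵥ w = fun _ => ∑ i, w i := by
  funext
  simp [mulVec, dotProduct]

section rQK

variable {n m : ℕ} (A K : Matrix (Fin n) (Fin n) ℝ)

theorem rQK_mulVec_tmul (w : Fin m → ℝ) (v : Fin n → ℝ) :
    rQK m A K *ᵥ (fun p => w p.1 * v p.2) =
      fun p => w p.1 * (A *ᵥ v) p.2 + (∑ i, w i) * (K *ᵥ v) p.2 := by
  rw [rQK, add_mulVec, kronecker_mulVec_tmul, kronecker_mulVec_tmul, one_mulVec,
    of_const_one_mulVec]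
  rfl

theorem rQK_mulVec_const_tmul (c : ℝ) (v : Fin n → ℝ) :
    rQK m A K *ᵥ (fun p => c * v p.2) = fun p => c * ((A + (m : ℝ) • K) *ᵥ v) p.2 := by
  rw [rQK_mulVec_tmul A K (fun _ => c)]
  funext p
  simp only [Finset.sum_const, Finset.card_univ, Fintype.card_fin, nsmul_eq_mul, add_mulVec,
    smul_mulVec, Pi.add_apply, Pi.smul_apply, smul_eq_mul]
  ring

theorem rQK_mulVec_tmul_of_sum_eq_zero {w : Fin m → ℝ} (hw : ∑ i, w i = 0)
    (v : Fin n → ℝ) :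
    rQK m A K *ᵥ (fun p => w p.1 * v p.2) = fun p => w p.1 * (A *ᵥ v) p.2 := by
  simp only [rQK_mulVec_tmul, hw, zero_mul, add_zero]

end rQK

theorem const_mul_tmul_ne_zero {m n : ℕ} (hm : 0 < m) {c : ℝ} (hc : c ≠ 0) {v : Fin n → ℝ}
    (hv : v ≠ 0) : (fun p : Fin m × Fin n => c * v p.2) ≠ 0 := by
  obtain ⟨j, hj⟩ := Function.ne_iff.mp hv
  exact Function.ne_iff.mpr ⟨(⟨0, hm⟩, j), mul_ne_zero hc hj⟩

/-- Eigenvectors of `rQK(A,K)`: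
(i) if `v` is an eigenvector of `A + m·K` with eigenvalue `λ`, then `(e/√m) ⊗ v` is
a (nonzero) eigenvector of `rQK(A,K)` with eigenvalue `λ`;
(ii) if `w` sums to zero and `v` is an eigenvector of `A` with eigenvalue `μ`, then
`w ⊗ v` satisfies `rQK(A,K) (w ⊗ v) = μ (w ⊗ v)` (an eigenvector whenever it is
nonzero). -/
theorem rQK_eigenvectors (n m : ℕ) (hm : 0 < m) (A K : Matrix (Fin n) (Fin n) ℝ) :
    (∀ (v : Fin n → ℝ) (lam : ℝ), v ≠ 0 →
      (A + (m : ℝ) • K).mulVec v = lam • v →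
        (fun p : Fin m × Fin n => (Real.sqrt m)⁻¹ * v p.2) ≠ 0 ∧
          (rQK m A K).mulVec (fun p : Fin m × Fin n => (Real.sqrt m)⁻¹ * v p.2) =
            lam • fun p : Fin m × Fin n => (Real.sqrt m)⁻¹ * v p.2) ∧
    (∀ (w : Fin m → ℝ) (v : Fin n → ℝ) (mu : ℝ), (∑ i, w i) = 0 → v ≠ 0 →
      A.mulVec v = mu • v →
        (rQK m A K).mulVec (fun p : Fin m × Fin n => w p.1 * v p.2) =
          mu • fun p : Fin m × Fin n => w p.1 * v p.2) := by
  refine ⟨fun v lam hv heig => ⟨?_, ?_⟩, fun w v mu hw _ heig => ?_⟩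
  · exact const_mul_tmul_ne_zero hm (by positivity) hv
  · rw [rQK_mulVec_const_tmul, heig]
    funext p
    simp only [Pi.smul_apply, smul_eq_mul]
    ring
  · rw [rQK_mulVec_tmul_of_sum_eq_zero A K hw, heig]
    funext p
    simp only [Pi.smul_apply, smul_eq_mul]
    ring
end
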